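/- arXiv:math/0610478 — 2 statements merged into one kernel-verified Lean document; each statement's English description precedes it below -/
import Mathlib

section
/- Let g be a Lie algebra with trivial center and A a unital commutative associative algebra. If f is a derivation of A with f ≠ 0, then the derivation Id ⊗ f of the current Lie algebra g ⊗ A is not inner, i.e., Id ⊗ f ≠ ad(u) for every u ∈ g ⊗ A. -/
open scoped TensorProduct

/-- If `g` is a nonzero Lie algebra with trivial center, `A` a unital
commutative associative algebra and `f` a nonzero derivation of `A`, then the
derivation `Id ⊗ f` of the current Lie algebra `g ⊗ A` is not inner. -/
theorem id_tensor_derivation_not_inner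
    (K : Type*) [Field K]
    (L : Type*) [LieRing L] [LieAlgebra K L] [FiniteDimensional K L] [Nontrivial L]
    (A : Type*) [CommRing A] [Algebra K A] [FiniteDimensional K A]
    (hZ : ∀ X : L, (∀ Y : L, ⁅X, Y⁆ = 0) → X = 0)
    (f : A →ₗ[K] A) (hf : ∀ a b : A, f (a * b) = f a * b + a * f b)
    (hf0 : f ≠ 0) :
    ¬ ∃ u : A ⊗[K] L, ∀ v : A ⊗[K] L,
        (TensorProduct.map f (LinearMap.id : L →ₗ[K] L)) v = ⁅u, v⁆ := by
  rintro ⟨u, hu⟩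
  -- f 1 = 0
  have hf1 : f 1 = 0 := by
    have := hf 1 1
    simp only [mul_one, one_mul] at this
    exact left_eq_add.mp this
  -- u brackets to zero with 1 ⊗ X
  have hzero : ∀ X : L, ⁅u, (1 : A) ⊗ₜ[K] X⁆ = 0 := by
    intro X
    rw [← hu]
    simp [hf1]
  obtain ⟨a, ha⟩ : ∃ a : A, f a ≠ 0 := by
    by_contra h
    push_neg at h
    exact hf0 (LinearMap.ext fun a => by simp [h a])
  obtain ⟨X, hX⟩ := exists_ne (0 : L)
  have key : ⁅u, a ⊗ₜ[K] X⁆ = 0 := by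
    have : a ⊗ₜ[K] X = a • ((1 : A) ⊗ₜ[K] X) := by
      rw [TensorProduct.smul_tmul', smul_eq_mul, mul_one]
    rw [this, lie_smul a u ((1 : A) ⊗ₜ[K] X), hzero, smul_zero]
  have h2 : f a ⊗ₜ[K] X = (0 : A ⊗[K] L) := by
    have := hu (a ⊗ₜ[K] X)
    simpa [key] using this
  -- but f a ⊗ X ≠ 0
  obtain ⟨g, hg⟩ : ∃ g : A →ₗ[K] K, g (f a) ≠ 0 := by
    by_contra h
    push_neg at h
    exact ha ((Module.forall_dual_apply_eq_zero_iff K (f a)).mp h)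
  obtain ⟨p, hp⟩ : ∃ p : L →ₗ[K] K, p X ≠ 0 := by
    by_contra h
    push_neg at h
    exact hX ((Module.forall_dual_apply_eq_zero_iff K X).mp h)
  have := congrArg (fun v => (TensorProduct.lid K K) (TensorProduct.map g p v)) h2
  simp only [TensorProduct.map_tmul, TensorProduct.lid_tmul, map_zero, smul_eq_mul] at this
  exact (mul_ne_zero hg hp) this
end

section
/- Let f = f₁ ⊗ f₂ be a pure tensor endomorphism of the current Lie algebra g ⊗ A, where A is unital and f₂(1) ≠ 0. If f is a derivation of g ⊗ A, then f₁ is a derivation of g. -/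
open scoped TensorProduct

/-- If `f = f₁ ⊗ f₂` is a pure tensor endomorphism of the current Lie algebra
`g ⊗ A` with `A` unital and `f₂ 1 ≠ 0`, and `f` is a derivation of `g ⊗ A`,
then `f₁` is a derivation of `g`. -/
theorem pure_tensor_derivation_component
    (K : Type*) [Field K]
    (L : Type*) [LieRing L] [LieAlgebra K L]
    (A : Type*) [CommRing A] [Algebra K A]
    (f₁ : L →ₗ[K] L) (f₂ : A →ₗ[K] A) (hf₂ : f₂ 1 ≠ 0)
    (hder : ∀ u v : A ⊗[K] L,
      (TensorProduct.map f₂ f₁) ⁅u, v⁆ =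
        ⁅(TensorProduct.map f₂ f₁) u, v⁆ + ⁅u, (TensorProduct.map f₂ f₁) v⁆) :
    ∀ X Y : L, f₁ ⁅X, Y⁆ = ⁅f₁ X, Y⁆ + ⁅X, f₁ Y⁆ := by
  intro X Y
  have h := hder (1 ⊗ₜ X) (1 ⊗ₜ Y)
  rw [LieAlgebra.ExtendScalars.bracket_tmul] at h
  simp only [TensorProduct.map_tmul, LieAlgebra.ExtendScalars.bracket_tmul, one_mul,
    mul_one] at h
  obtain ⟨φ, hφ⟩ : ∃ φ : Module.Dual K A, φ (f₂ 1) = 1 := by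
    obtain ⟨ψ, hψ⟩ : ∃ ψ : Module.Dual K A, ψ (f₂ 1) ≠ 0 := by
      by_contra hc
      push_neg at hc
      exact hf₂ ((Module.forall_dual_apply_eq_zero_iff K _).mp hc)
    exact ⟨(ψ (f₂ 1))⁻¹ • ψ, by simp [inv_mul_cancel₀ hψ]⟩
  have h2 := congrArg (TensorProduct.map φ (LinearMap.id (R := K) (M := L))) h
  simp only [map_add, TensorProduct.map_tmul, hφ, LinearMap.id_coe, id_eq] at h2
  have h3 := congrArg (TensorProduct.lid K L) h2
  simpa using h3
end
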